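/- arXiv:1705.06999 — 5 statements merged into one kernel-verified Lean document; each statement's English description precedes it below -/
import Mathlib

section
/- Let u, v : Ω → ℝ be smooth, let α ∈ ℝ with α ≠ 0, and suppose u₁ and v₁ vanish nowhere on Ω. If α·u₂·v₁ = u₁·v₂ and u₄·v₁ = u₁·v₃ hold identically on Ω, then u satisfies the second-order equation ∂₃(u₂/u₁) − ∂₄(u₂/u₁) = (α⁻¹ − 1)·∂₂(u₄/u₁) on Ω, and v satisfies the second-order equation ∂₄(v₂/v₁) − ∂₃(v₂/v₁) = (α − 1)·∂₂(v₃/v₁) on Ω. -/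
/-- Partial derivative of `F : ℝ⁴ → ℝ` in the `i`-th coordinate direction. -/
noncomputable def pd (i : Fin 4) (F : (Fin 4 → ℝ) → ℝ) : (Fin 4 → ℝ) → ℝ :=
  fun x => fderiv ℝ F x (Pi.single i 1)

/-!
Write `r_i = w_i / w_1` for the slopes of the level sets of a function `w`. Equality of mixed
partials of `w` turns into the compatibility relation `∂_i r_j - ∂_j r_i = r_i ∂_1 r_j - r_j ∂_1 r_i`.
The first-order system says exactly that `v` has the slopes `v₂ / v₁ = α u₂ / u₁` and
`v₃ / v₁ = u₄ / u₁`. Writing the compatibility relation once for `u` (indices 2, 4) and once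
for `v` (indices 2, 3) and substituting, the right-hand sides agree up to the factor `α`, and
subtracting gives `α (∂₃ p - ∂₄ p) = (1 - α) ∂₂ q` for `p = u₂ / u₁`, `q = u₄ / u₁`.
Both equations of the theorem are rescalings of this single identity.
-/

open Filter Topology

noncomputable def pdRatio (i k : Fin 4) (w : (Fin 4 → ℝ) → ℝ) : (Fin 4 → ℝ) → ℝ :=
  fun y => pd i w y / pd k w y

section PartialDerivatives

variable {F G : (Fin 4 → ℝ) → ℝ} {x : Fin 4 → ℝ}

lemma pd_differentiableAt (i : Fin 4) (hF : ContDiffAt ℝ 2 F x) :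
    DifferentiableAt ℝ (pd i F) x :=
  ((hF.fderiv_right (m := 1) le_rfl).differentiableAt one_ne_zero).clm_apply
    (differentiableAt_const _)

lemma pd_comm (i j : Fin 4) (hF : ContDiffAt ℝ 2 F x) :
    pd i (pd j F) x = pd j (pd i F) x := by
  have hd : DifferentiableAt ℝ (fderiv ℝ F) x :=
    (hF.fderiv_right (m := 1) le_rfl).differentiableAt one_ne_zero
  have hs : IsSymmSndFDerivAt ℝ F x :=
    hF.isSymmSndFDerivAt (by simp [minSmoothness_of_isRCLikeNormedField])
  have hsnd : ∀ a b : Fin 4,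
      pd a (pd b F) x = fderiv ℝ (fderiv ℝ F) x (Pi.single a 1) (Pi.single b 1) := by
    intro a b
    change fderiv ℝ (fun y => fderiv ℝ F y (Pi.single b 1)) x (Pi.single a 1) = _
    rw [fderiv_clm_apply hd (differentiableAt_const _)]
    simp
  rw [hsnd, hsnd, hs.eq]

lemma pd_const_mul (i : Fin 4) (a : ℝ) (hF : DifferentiableAt ℝ F x) :
    pd i (fun y => a * F y) x = a * pd i F x := by
  simp [pd, fderiv_const_mul hF a]

lemma pd_div (i : Fin 4) (hF : DifferentiableAt ℝ F x) (hG : DifferentiableAt ℝ G x)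
    (hGx : G x ≠ 0) :
    pd i (fun y => F y / G y) x = (pd i F x * G x - F x * pd i G x) / G x ^ 2 := by
  have hderiv : HasFDerivAt (fun y => F y * (G y)⁻¹)
      (F x • (-(G x ^ 2)⁻¹ • fderiv ℝ G x) + (G x)⁻¹ • fderiv ℝ F x) x :=
    hF.hasFDerivAt.mul ((hasDerivAt_inv hGx).comp_hasFDerivAt x hG.hasFDerivAt)
  simp only [pd, div_eq_mul_inv, hderiv.fderiv, add_apply, smul_apply, smul_eq_mul]
  field_simp
  ring

lemma pd_congr_of_eventuallyEq (i : Fin 4) (h : F =ᶠ[𝓝 x] G) : pd i F x = pd i G x := by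
  simp [pd, h.fderiv_eq]

end PartialDerivatives

section Slopes

variable {u v w : (Fin 4 → ℝ) → ℝ} {x : Fin 4 → ℝ}

lemma pdRatio_differentiableAt (i k : Fin 4) (hw : ContDiffAt ℝ 2 w x) (hk : pd k w x ≠ 0) :
    DifferentiableAt ℝ (pdRatio i k w) x := by
  unfold pdRatio
  simp only [div_eq_mul_inv]
  exact (pd_differentiableAt i hw).fun_mul ((pd_differentiableAt k hw).fun_inv hk)

lemma pd_pdRatio (i j k : Fin 4) (hw : ContDiffAt ℝ 2 w x) (hk : pd k w x ≠ 0) :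
    pd i (pdRatio j k w) x
      = (pd i (pd j w) x * pd k w x - pd j w x * pd i (pd k w) x) / pd k w x ^ 2 :=
  pd_div i (pd_differentiableAt j hw) (pd_differentiableAt k hw) hk

theorem pd_pdRatio_sub_pd_pdRatio (i j k : Fin 4) (hw : ContDiffAt ℝ 2 w x)
    (hk : pd k w x ≠ 0) :
    pd i (pdRatio j k w) x - pd j (pdRatio i k w) x
      = pdRatio i k w x * pd k (pdRatio j k w) x
        - pdRatio j k w x * pd k (pdRatio i k w) x := by
  simp only [pd_pdRatio _ _ k hw hk, pdRatio]
  rw [pd_comm j i hw, pd_comm i k hw, pd_comm j k hw]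
  field_simp
  ring

theorem mul_pd_pdRatio_sub_eq (α : ℝ) (hu : ContDiffAt ℝ 2 u x) (hv : ContDiffAt ℝ 2 v x)
    (hu0 : pd 0 u x ≠ 0) (hv0 : pd 0 v x ≠ 0)
    (h1 : pdRatio 1 0 v =ᶠ[𝓝 x] fun y => α * pdRatio 1 0 u y)
    (h2 : pdRatio 2 0 v =ᶠ[𝓝 x] pdRatio 3 0 u) :
    α * (pd 2 (pdRatio 1 0 u) x - pd 3 (pdRatio 1 0 u) x)
      = (1 - α) * pd 1 (pdRatio 3 0 u) x := by
  have hp := pdRatio_differentiableAt 1 0 hu hu0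
  have compat_u := pd_pdRatio_sub_pd_pdRatio 1 3 0 hu hu0
  have compat_v := pd_pdRatio_sub_pd_pdRatio 1 2 0 hv hv0
  rw [pd_congr_of_eventuallyEq _ h1, pd_congr_of_eventuallyEq _ h1,
    pd_congr_of_eventuallyEq _ h2, pd_congr_of_eventuallyEq _ h2, h1.eq_of_nhds, h2.eq_of_nhds,
    pd_const_mul _ _ hp, pd_const_mul _ _ hp] at compat_v
  linear_combination α * compat_u - compat_v

end Slopes

/-- Elimination of `v` (resp. `u`) from the linearly degenerate system
`α u₂ v₁ = u₁ v₂`, `u₄ v₁ = u₁ v₃` yields second-order equations for `u` and `v`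
(4D Bäcklund transformation).  Coordinates `x¹,…,x⁴` are indexed by `0,…,3`. -/
theorem statement0 (Ω : Set (Fin 4 → ℝ)) (hΩ : IsOpen Ω)
    (u v : (Fin 4 → ℝ) → ℝ)
    (hu : ContDiffOn ℝ (⊤ : ℕ∞) u Ω) (hv : ContDiffOn ℝ (⊤ : ℕ∞) v Ω)
    (α : ℝ) (hα : α ≠ 0)
    (hu1 : ∀ x ∈ Ω, pd 0 u x ≠ 0) (hv1 : ∀ x ∈ Ω, pd 0 v x ≠ 0)
    (heq1 : ∀ x ∈ Ω, α * pd 1 u x * pd 0 v x = pd 0 u x * pd 1 v x)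
    (heq2 : ∀ x ∈ Ω, pd 3 u x * pd 0 v x = pd 0 u x * pd 2 v x) :
    (∀ x ∈ Ω,
      pd 2 (fun y => pd 1 u y / pd 0 u y) x - pd 3 (fun y => pd 1 u y / pd 0 u y) x
        = (α⁻¹ - 1) * pd 1 (fun y => pd 3 u y / pd 0 u y) x) ∧
    (∀ x ∈ Ω,
      pd 3 (fun y => pd 1 v y / pd 0 v y) x - pd 2 (fun y => pd 1 v y / pd 0 v y) x
        = (α - 1) * pd 1 (fun y => pd 2 v y / pd 0 v y) x) := by
  have smooth : ∀ w : (Fin 4 → ℝ) → ℝ, ContDiffOn ℝ (⊤ : ℕ∞) w Ω → ∀ x ∈ Ω, ContDiffAt ℝ 2 w x :=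
    fun w hw x hx => (hw.contDiffAt (hΩ.mem_nhds hx)).of_le (by norm_cast)
  have slope1 : ∀ x ∈ Ω, pdRatio 1 0 v =ᶠ[𝓝 x] fun y => α * pdRatio 1 0 u y :=
    fun x hx => eventually_of_mem (hΩ.mem_nhds hx) fun y hy => by
      simp only [pdRatio]
      field_simp [hu1 y hy, hv1 y hy]
      linear_combination (heq1 y hy).symm
  have slope2 : ∀ x ∈ Ω, pdRatio 2 0 v =ᶠ[𝓝 x] pdRatio 3 0 u :=
    fun x hx => eventually_of_mem (hΩ.mem_nhds hx) fun y hy => by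
      simp only [pdRatio]
      field_simp [hu1 y hy, hv1 y hy]
      linear_combination (heq2 y hy).symm
  have key : ∀ x ∈ Ω, α * (pd 2 (pdRatio 1 0 u) x - pd 3 (pdRatio 1 0 u) x)
      = (1 - α) * pd 1 (pdRatio 3 0 u) x := fun x hx =>
    mul_pd_pdRatio_sub_eq α (smooth u hu x hx) (smooth v hv x hx) (hu1 x hx) (hv1 x hx)
      (slope1 x hx) (slope2 x hx)
  refine ⟨fun x hx => ?_, fun x hx => ?_⟩
  · change pd 2 (pdRatio 1 0 u) x - pd 3 (pdRatio 1 0 u) x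
      = (α⁻¹ - 1) * pd 1 (pdRatio 3 0 u) x
    field_simp
    linear_combination key x hx
  · change pd 3 (pdRatio 1 0 v) x - pd 2 (pdRatio 1 0 v) x = (α - 1) * pd 1 (pdRatio 2 0 v) x
    have hp := pdRatio_differentiableAt 1 0 (smooth u hu x hx) (hu1 x hx)
    rw [pd_congr_of_eventuallyEq _ (slope1 x hx), pd_congr_of_eventuallyEq _ (slope1 x hx),
      pd_congr_of_eventuallyEq _ (slope2 x hx), pd_const_mul _ _ hp, pd_const_mul _ _ hp]
    linear_combination -key x hx
end

section
/- Let m, n : Ω → ℝ be smooth. Then the quasilinear system m₄ − n₃ + m·n₂ − n·m₂ = 0, m₃ − n₂ + m·n₁ − n·m₁ = 0 holds identically on Ω if and only if for every λ ∈ ℝ the vector fields X = ∂₃ − (λ + m)·∂₂ + λ·m·∂₁ and Y = ∂₄ − (λ² + λ·m + n)·∂₂ + (λ²·m + λ·n)·∂₁ on Ω commute: [X, Y] = 0. -/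
/-- Lie bracket of two vector fields on ℝ⁴, given by their component functions:
`[X, Y]ⁱ = Σⱼ (Xʲ ∂ⱼYⁱ − Yʲ ∂ⱼXⁱ)`. -/
noncomputable def lieB (X Y : (Fin 4 → ℝ) → (Fin 4 → ℝ)) : (Fin 4 → ℝ) → (Fin 4 → ℝ) :=
  fun x i => ∑ j : Fin 4, (X x j * pd j (fun y => Y y i) x - Y x j * pd j (fun y => X y i) x)

section PartialDerivative

variable {f g : (Fin 4 → ℝ) → ℝ} {x : Fin 4 → ℝ} (j : Fin 4)

lemma pd_const (c : ℝ) : pd j (fun _ => c) x = 0 := by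
  simp [pd]

lemma pd_const_add (c : ℝ) : pd j (fun y => c + f y) x = pd j f x := by
  simp [pd, fderiv_const_add]

lemma pd_neg : pd j (fun y => -f y) x = -pd j f x := by
  simp [pd, fderiv_fun_neg]

lemma pd_add (hf : DifferentiableAt ℝ f x) (hg : DifferentiableAt ℝ g x) :
    pd j (fun y => f y + g y) x = pd j f x + pd j g x := by
  simp [pd, fderiv_fun_add hf hg]

lemma pd_const_mul_s13 (hf : DifferentiableAt ℝ f x) (c : ℝ) :
    pd j (fun y => c * f y) x = c * pd j f x := by
  simp [pd, fderiv_const_mul hf c]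

end PartialDerivative

section LaxPair

variable (m n : (Fin 4 → ℝ) → ℝ) (x : Fin 4 → ℝ)

-- `m₄ − n₃ + m n₂ − n m₂`: the coordinates `x¹,…,x⁴` are indexed by `0,…,3`.
noncomputable def quasilinear₁ : ℝ := pd 3 m x - pd 2 n x + m x * pd 1 n x - n x * pd 1 m x

noncomputable def quasilinear₂ : ℝ := pd 2 m x - pd 1 n x + m x * pd 0 n x - n x * pd 0 m x

variable {m n x}

theorem lieB_laxPair (hm : DifferentiableAt ℝ m x) (hn : DifferentiableAt ℝ n x) (lam : ℝ) :
    lieB (fun y => ![lam * m y, -(lam + m y), 1, 0])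
        (fun y => ![lam ^ 2 * m y + lam * n y, -(lam ^ 2 + lam * m y + n y), 0, 1]) x =
      ![lam ^ 2 * quasilinear₂ m n x - lam * quasilinear₁ m n x,
        quasilinear₁ m n x - lam * quasilinear₂ m n x, 0, 0] := by
  funext i
  fin_cases i <;>
    simp (disch := fun_prop) only [lieB, quasilinear₁, quasilinear₂, Fin.sum_univ_four,
      Fin.zero_eta, Fin.mk_one, Fin.reduceFinMk, Fin.isValue, Matrix.cons_val_zero,
      Matrix.cons_val_one, Matrix.cons_val_two, Matrix.cons_val_three, Matrix.head_cons,
      Matrix.tail_cons, pd_const, pd_const_add, pd_neg, pd_add, pd_const_mul_s13] <;>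
    ring

end LaxPair

/-- The quasilinear system `m₄ − n₃ + mn₂ − nm₂ = 0`, `m₃ − n₂ + mn₁ − nm₁ = 0` holds on `Ω`
iff for every `λ` the vector fields `X = ∂₃ − (λ + m)∂₂ + λm∂₁` and
`Y = ∂₄ − (λ² + λm + n)∂₂ + (λ²m + λn)∂₁` commute on `Ω`
(common Lax pair of the two canonical systems with a 5×4 Kronecker block).
Coordinates `x¹,…,x⁴` are indexed by `0,…,3`. -/
theorem statement13 (Ω : Set (Fin 4 → ℝ)) (hΩ : IsOpen Ω)
    (m n : (Fin 4 → ℝ) → ℝ)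
    (hm : ContDiffOn ℝ (⊤ : ℕ∞) m Ω) (hn : ContDiffOn ℝ (⊤ : ℕ∞) n Ω) :
    (∀ x ∈ Ω,
        pd 3 m x - pd 2 n x + m x * pd 1 n x - n x * pd 1 m x = 0 ∧
        pd 2 m x - pd 1 n x + m x * pd 0 n x - n x * pd 0 m x = 0) ↔
    (∀ lam : ℝ, ∀ x ∈ Ω,
        lieB (fun y => ![lam * m y, -(lam + m y), 1, 0])
             (fun y => ![lam ^ 2 * m y + lam * n y, -(lam ^ 2 + lam * m y + n y), 0, 1])
          x = 0) := by
  have hdiff : ∀ x ∈ Ω, DifferentiableAt ℝ m x ∧ DifferentiableAt ℝ n x := fun x hx =>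
    ⟨(hm.differentiableOn (by simp)).differentiableAt (hΩ.mem_nhds hx),
      (hn.differentiableOn (by simp)).differentiableAt (hΩ.mem_nhds hx)⟩
  constructor
  · intro h lam x hx
    obtain ⟨h₁, h₂⟩ : quasilinear₁ m n x = 0 ∧ quasilinear₂ m n x = 0 := h x hx
    rw [lieB_laxPair (hdiff x hx).1 (hdiff x hx).2, h₁, h₂]
    simp
  · intro h x hx
    obtain ⟨hmx, hnx⟩ := hdiff x hx
    have hsecond : ∀ lam : ℝ, quasilinear₁ m n x - lam * quasilinear₂ m n x = 0 := fun lam =>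
      congrFun ((lieB_laxPair hmx hnx lam).symm.trans (h lam x hx)) 1
    change quasilinear₁ m n x = 0 ∧ quasilinear₂ m n x = 0
    constructor <;> linarith [hsecond 0, hsecond 1]
end

section
/- Let fₐ, f_b, f_c, f_p, f_q, f_r, hₐ, h_b, h_c, h_p, h_q, h_r be real numbers (standing for the partial derivatives of f and h with respect to u₁, u₂, u₃, v₁, v₂, v₃). Define the symmetric 4×4 matrix G by: G₄₄ = 1; G₁₄ = G₄₁ = −½(fₐ + h_p), G₂₄ = G₄₂ = −½(f_b + h_q), G₃₄ = G₄₃ = −½(f_c + h_r); and for i, j ∈ {1,2,3}, G_{ij} = ½(fᵤᵢ·h_{vⱼ} + fᵤⱼ·h_{vᵢ} − f_{vᵢ}·hᵤⱼ − f_{vⱼ}·hᵤᵢ), where (fᵤ₁, fᵤ₂, fᵤ₃) = (fₐ, f_b, f_c), (f_{v₁}, f_{v₂}, f_{v₃}) = (f_p, f_q, f_r), and similarly for h. Then det G = ( ¼·(fₐf_qh_c − fₐf_rh_b − f_bf_ph_c + f_bf_rhₐ + f_cf_ph_b − f_cf_qhₐ − f_ph_bh_r + f_ph_ch_q + f_qhₐh_r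 − f_qh_ch_p − f_rhₐh_q + f_rh_bh_p) )². -/
/-!
Bordering by the last row and column, whose corner entry is `1`, reduces `det G` to the
determinant of the Schur complement `A - c cᵀ`, where `A` is the `3 × 3` block of `G` and
`c = -(f_u + h_v)/2` its border. Completing the square in `f_u, h_v` gives
`A - c cᵀ = -¼ d dᵀ - ½ (f_v h_uᵀ + h_u f_vᵀ)` with `d = f_u - h_v`: a sum of three rank-one
matrices, i.e. a product `Uᵀ V` of two `3 × 3` matrices whose rows are `d, f_v, h_u` and
`-d/4, -h_u/2, -f_v/2` respectively. Hence `det G = det U · det V = (det U / 4)²`, and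
`det U = det (f_u - h_v, f_v, h_u)` is the cubic of the statement.
-/

open Matrix

theorem Matrix.det_sum_vecMulVec {R n : Type*} [CommRing R] [Fintype n] [DecidableEq n]
    (u v : n → n → R) :
    det (∑ k, vecMulVec (u k) (v k)) = det (of u) * det (of v) := by
  have h : ∑ k, vecMulVec (u k) (v k) = (of u)ᵀ * of v := by
    ext i j
    simp [mul_apply, vecMulVec_apply, Matrix.sum_apply]
  rw [h, det_mul, det_transpose]

theorem Matrix.det_fromBlocks_replicateCol_replicateRow_one {R m ι : Type*} [CommRing R]
    [Fintype m] [DecidableEq m] [Fintype ι] [DecidableEq ι] [Unique ι]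
    (A : Matrix m m R) (b c : m → R) :
    det (fromBlocks A (replicateCol ι b) (replicateRow ι c) 1) = det (A - vecMulVec b c) := by
  rw [det_fromBlocks_one₂₂]
  congr 2
  ext i j
  simp [mul_apply, vecMulVec_apply]

section CharacteristicMetric

variable {R : Type*} [Field R] {n : ℕ}

/-- `gⁱʲ` for the system `u_{n+1} = f, v_{n+1} = h`, where `fu, fv, hu, hv` are the gradients of
`f, h` in `u₁, …, uₙ` and `v₁, …, vₙ`; the last index is that of `u_{n+1}, v_{n+1}`. -/
def characteristicMetric (fu fv hu hv : Fin n → R) : Matrix (Fin (n + 1)) (Fin (n + 1)) R :=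
  of fun i j =>
    if hi : (i : ℕ) < n then
      if hj : (j : ℕ) < n then
        (fu ⟨i, hi⟩ * hv ⟨j, hj⟩ + fu ⟨j, hj⟩ * hv ⟨i, hi⟩
          - fv ⟨i, hi⟩ * hu ⟨j, hj⟩ - fv ⟨j, hj⟩ * hu ⟨i, hi⟩) / 2
      else -(fu ⟨i, hi⟩ + hv ⟨i, hi⟩) / 2
    else
      if hj : (j : ℕ) < n then -(fu ⟨j, hj⟩ + hv ⟨j, hj⟩) / 2 else 1

def metricBlock (fu fv hu hv : Fin n → R) : Matrix (Fin n) (Fin n) R :=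
  (2 : R)⁻¹ • (vecMulVec fu hv + vecMulVec hv fu - vecMulVec fv hu - vecMulVec hu fv)

theorem det_characteristicMetric (fu fv hu hv : Fin n → R) :
    det (characteristicMetric fu fv hu hv) =
      det (metricBlock fu fv hu hv
        - vecMulVec (-(2 : R)⁻¹ • (fu + hv)) (-(2 : R)⁻¹ • (fu + hv))) := by
  rw [← det_reindex_self (finSumFinEquiv (m := n) (n := 1)).symm,
    ← det_fromBlocks_replicateCol_replicateRow_one (ι := Fin 1)]
  congr 1
  ext (i | i) (j | j) <;>
    dsimp only [characteristicMetric, reindex_apply, submatrix_apply, Equiv.symm_symm,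
      finSumFinEquiv_apply_left, finSumFinEquiv_apply_right, of_apply, Fin.val_castAdd,
      Fin.val_natAdd] <;>
    simp only [Fin.is_lt, ↓reduceDIte, Fin.eta, Fin.fin_one_eq_zero, Fin.val_eq_zero, add_zero,
      lt_self_iff_false, metricBlock, fromBlocks_apply₁₁, fromBlocks_apply₁₂, fromBlocks_apply₂₁,
      fromBlocks_apply₂₂, replicateCol_apply, replicateRow_apply, one_apply_eq, Matrix.smul_apply,
      Matrix.sub_apply, Matrix.add_apply, vecMulVec_apply, Pi.add_apply,
      Pi.smul_apply, smul_eq_mul] <;>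
    ring

theorem metricBlock_sub_vecMulVec [CharZero R] (fu fv hu hv : Fin n → R) :
    metricBlock fu fv hu hv - vecMulVec (-(2 : R)⁻¹ • (fu + hv)) (-(2 : R)⁻¹ • (fu + hv)) =
      vecMulVec (fu - hv) (-(4 : R)⁻¹ • (fu - hv)) + vecMulVec fv (-(2 : R)⁻¹ • hu)
        + vecMulVec hu (-(2 : R)⁻¹ • fv) := by
  ext i j
  simp only [metricBlock, Matrix.sub_apply, Matrix.add_apply, Matrix.smul_apply, vecMulVec_apply,
    Pi.add_apply, Pi.sub_apply, Pi.smul_apply, smul_eq_mul]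
  ring

theorem det_characteristicMetric_fin_three [CharZero R] (fu fv hu hv : Fin 3 → R) :
    det (characteristicMetric fu fv hu hv) = (det (of ![fu - hv, fv, hu]) / 4) ^ 2 := by
  have h := det_sum_vecMulVec ![fu - hv, fv, hu]
    ![-(4 : R)⁻¹ • (fu - hv), -(2 : R)⁻¹ • hu, -(2 : R)⁻¹ • fv]
  simp only [Fin.sum_univ_three, cons_val_zero, cons_val_one, cons_val_two, head_cons,
    tail_cons] at h
  rw [det_characteristicMetric, metricBlock_sub_vecMulVec, h]
  simp only [det_fin_three, of_apply, cons_val', cons_val_zero, cons_val_one, cons_val,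
    cons_val_fin_one, Pi.sub_apply, Pi.smul_apply, smul_eq_mul]
  ring

end CharacteristicMetric

/-- The determinant of the contravariant metric `G = (gⁱʲ)` attached to the characteristic
variety of the evolutionary system `u₄ = f(u₁,u₂,u₃,v₁,v₂,v₃)`, `v₄ = h(u₁,u₂,u₃,v₁,v₂,v₃)`
is a perfect square of a cubic polynomial in the twelve first-order derivatives of `f, h`. -/
theorem statement15 (fa fb fc fp fq fr ha hb hc hp hq hr : ℝ) :
    (Matrix.det
      (Matrix.of fun i j : Fin 4 =>
        if hi : (i : ℕ) < 3 then
          if hj : (j : ℕ) < 3 then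
            (![fa, fb, fc] ⟨i, hi⟩ * ![hp, hq, hr] ⟨j, hj⟩
              + ![fa, fb, fc] ⟨j, hj⟩ * ![hp, hq, hr] ⟨i, hi⟩
              - ![fp, fq, fr] ⟨i, hi⟩ * ![ha, hb, hc] ⟨j, hj⟩
              - ![fp, fq, fr] ⟨j, hj⟩ * ![ha, hb, hc] ⟨i, hi⟩) / 2
          else -(![fa, fb, fc] ⟨i, hi⟩ + ![hp, hq, hr] ⟨i, hi⟩) / 2
        else
          if hj : (j : ℕ) < 3 then
            -(![fa, fb, fc] ⟨j, hj⟩ + ![hp, hq, hr] ⟨j, hj⟩) / 2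
          else 1))
    = ((1 / 4) * (fa * fq * hc - fa * fr * hb - fb * fp * hc + fb * fr * ha
        + fc * fp * hb - fc * fq * ha - fp * hb * hr + fp * hc * hq
        + fq * ha * hr - fq * hc * hp - fr * ha * hq + fr * hb * hp)) ^ 2 := by
  refine (det_characteristicMetric_fin_three ![fa, fb, fc] ![fp, fq, fr] ![ha, hb, hc]
    ![hp, hq, hr]).trans ?_
  simp only [det_fin_three, of_apply, cons_val', cons_val_zero, cons_val_one, cons_val,
    cons_val_fin_one, sub_cons, head_cons, tail_cons]
  ring
end

section
/- Let α, β, γ, δ ∈ ℝ with γ ≠ δ, and let ξ¹, …, ξ⁷ ∈ ℝ with ξ⁶ ≠ 0 and ξ⁷ ≠ 0. Define u₁ = (δξ¹ − ξ²)/((δ−γ)ξ⁶), u₂ = (δξ² − ξ³)/((δ−γ)ξ⁶), u₃ = (δ−α)ξ⁴/((δ−γ)ξ⁶), u₄ = (δ−β)ξ⁵/((δ−γ)ξ⁶), and v₁ = (γξ¹ − ξ²)/((γ−δ)ξ⁷), v₂ = (γξ² − ξ³)/((γ−δ)ξ⁷), v₃ = (γ−α)ξ⁴/((γ−δ)ξ⁷),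 v₄ = (γ−β)ξ⁵/((γ−δ)ξ⁷). Then the two relations (δ−β)(γ−α)·u₃·v₄ = (δ−α)(γ−β)·u₄·v₃ and (γ−β)·u₄·(v₂ − δ·v₁) = (δ−β)·v₄·(u₂ − γ·u₁) hold. -/
theorem statement16_general (α β γ δ : ℝ)
    (ξ1 ξ2 ξ3 ξ4 ξ5 ξ6 ξ7 : ℝ)
    (u1 u2 u3 u4 v1 v2 v3 v4 : ℝ)
    (hu1 : u1 = (δ * ξ1 - ξ2) / ((δ - γ) * ξ6))
    (hu2 : u2 = (δ * ξ2 - ξ3) / ((δ - γ) * ξ6))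
    (hu3 : u3 = (δ - α) * ξ4 / ((δ - γ) * ξ6))
    (hu4 : u4 = (δ - β) * ξ5 / ((δ - γ) * ξ6))
    (hv1 : v1 = (γ * ξ1 - ξ2) / ((γ - δ) * ξ7))
    (hv2 : v2 = (γ * ξ2 - ξ3) / ((γ - δ) * ξ7))
    (hv3 : v3 = (γ - α) * ξ4 / ((γ - δ) * ξ7))
    (hv4 : v4 = (γ - β) * ξ5 / ((γ - δ) * ξ7)) :
    (δ - β) * (γ - α) * u3 * v4 = (δ - α) * (γ - β) * u4 * v3 ∧
    (γ - β) * u4 * (v2 - δ * v1) = (δ - β) * v4 * (u2 - γ * u1) := by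
  subst hu1 hu2 hu3 hu4 hv1 hv2 hv3 hv4
  -- On each side the denominators multiply to ((δ - γ) * ξ6) * ((γ - δ) * ξ7) and the numerators
  -- agree as polynomials, so no division needs to be cancelled.
  constructor <;> ring

/-- Chasles construction with a 3×2 Kronecker block and a diagonal Jordan block
`diag(α,β,γ,δ)` of Segre type [1111]: the parametrised affine coordinates
`(u₁,…,u₄,v₁,…,v₄)` of the image of `ξ ∈ ℙ⁶` satisfy the two stated algebraic relations
defining the corresponding sixfold in `Gr(4,6)`. -/
theorem statement16 (α β γ δ : ℝ) (hγδ : γ ≠ δ)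
    (ξ1 ξ2 ξ3 ξ4 ξ5 ξ6 ξ7 : ℝ) (hξ6 : ξ6 ≠ 0) (hξ7 : ξ7 ≠ 0)
    (u1 u2 u3 u4 v1 v2 v3 v4 : ℝ)
    (hu1 : u1 = (δ * ξ1 - ξ2) / ((δ - γ) * ξ6))
    (hu2 : u2 = (δ * ξ2 - ξ3) / ((δ - γ) * ξ6))
    (hu3 : u3 = (δ - α) * ξ4 / ((δ - γ) * ξ6))
    (hu4 : u4 = (δ - β) * ξ5 / ((δ - γ) * ξ6))
    (hv1 : v1 = (γ * ξ1 - ξ2) / ((γ - δ) * ξ7))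
    (hv2 : v2 = (γ * ξ2 - ξ3) / ((γ - δ) * ξ7))
    (hv3 : v3 = (γ - α) * ξ4 / ((γ - δ) * ξ7))
    (hv4 : v4 = (γ - β) * ξ5 / ((γ - δ) * ξ7)) :
    (δ - β) * (γ - α) * u3 * v4 = (δ - α) * (γ - β) * u4 * v3 ∧
    (γ - β) * u4 * (v2 - δ * v1) = (δ - β) * v4 * (u2 - γ * u1) :=
  statement16_general α β γ δ ξ1 ξ2 ξ3 ξ4 ξ5 ξ6 ξ7 u1 u2 u3 u4 v1 v2 v3 v4 hu1 hu2 hu3 hu4 hv1 hv2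
    hv3 hv4
end

section
/- On ℝ⁸ with coordinates (u₁, u₂, u₃, u₄, v₁, v₂, v₃, v₄), consider the 13 vector fields: ∂/∂u₁; ∂/∂u₄; ∂/∂v₂; ∂/∂v₃; ∂/∂u₂ + ∂/∂v₁; ∂/∂u₃ − ∂/∂v₄; u₁∂/∂u₁ + v₁∂/∂v₁ + u₂∂/∂u₂ + v₂∂/∂v₂; u₃∂/∂u₃ + v₃∂/∂v₃ + u₄∂/∂u₄ + v₄∂/∂v₄; u₁∂/∂u₄ + v₁∂/∂v₄ − u₂∂/∂u₃ − v₂∂/∂v₃; u₄∂/∂u₁ + v₄∂/∂v₁ − u₃∂/∂u₂ − v₃∂/∂v₂; u₁∂/∂u₂ + v₁∂/∂v₂ − u₄∂/∂u₃ − v₄∂/∂v₃ + Σₖ uₖ∂/∂vₖ; u₂∂/∂u₁ + v₂∂/∂v₁ − u₃∂/∂u₄ − v₃∂/∂v₄ + Σₖ vₖ∂/∂uₖ; u₂∂/∂u₂ + v₂∂/∂v₂ + u₃∂/∂u₃ + v₃∂/∂v₃ + Σₖ vₖ∂/∂vₖ. Then each of these 13 vector fields Z, applied as a derivation to the functions F₁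 = u₂ − v₁ and F₂ = u₃ + v₄, yields a function which is an ℝ-linear combination of F₁ and F₂; in particular Z(F₁) and Z(F₂) vanish on the common zero set {F₁ = 0, F₂ = 0}, so each Z is tangent to the sixfold defined by the linear system u₂ − v₁ = 0, u₃ + v₄ = 0. -/
/-!
A vector field acts on a function through its differential, `Z(F)(x) = dF_x (Z x)`, so on the
linear functions `F₁ = u₂ − v₁` and `F₂ = u₃ + v₄` it just evaluates them on its own components.
Each generator is affine in `x`, and `Z(F₁)`, `Z(F₂)` turn out to be explicit combinations of
`F₁, F₂`; vanishing on the sixfold follows at once.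
-/

/-- Partial derivative of `F : ℝ⁸ → ℝ` in the `i`-th coordinate direction. -/
noncomputable def pd8 (i : Fin 8) (F : (Fin 8 → ℝ) → ℝ) : (Fin 8 → ℝ) → ℝ :=
  fun x => fderiv ℝ F x (Pi.single i 1)

/-- A vector field `Z` on ℝ⁸ (given by its components) applied as a derivation to a
function `F`: `Z(F) = Σᵢ Zⁱ ∂ᵢF`. -/
noncomputable def applyVF (Z : (Fin 8 → ℝ) → (Fin 8 → ℝ)) (F : (Fin 8 → ℝ) → ℝ) :
    (Fin 8 → ℝ) → ℝ :=
  fun x => ∑ i : Fin 8, Z x i * pd8 i F x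

lemma applyVF_eq_fderiv (Z : (Fin 8 → ℝ) → (Fin 8 → ℝ)) (F : (Fin 8 → ℝ) → ℝ)
    (x : Fin 8 → ℝ) : applyVF Z F x = fderiv ℝ F x (Z x) := by
  conv_rhs => rw [← Finset.univ_sum_single (Z x)]
  simp only [applyVF, pd8, map_sum]
  refine Finset.sum_congr rfl fun i _ => ?_
  rw [← smul_eq_mul, ← map_smul, ← Pi.single_smul, smul_eq_mul, mul_one]

lemma applyVF_coord_sub (Z : (Fin 8 → ℝ) → (Fin 8 → ℝ)) (i j : Fin 8) (x : Fin 8 → ℝ) :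
    applyVF Z (fun y => y i - y j) x = Z x i - Z x j := by
  rw [applyVF_eq_fderiv, ((hasFDerivAt_apply i x).fun_sub (hasFDerivAt_apply j x)).fderiv]
  rfl

lemma applyVF_coord_add (Z : (Fin 8 → ℝ) → (Fin 8 → ℝ)) (i j : Fin 8) (x : Fin 8 → ℝ) :
    applyVF Z (fun y => y i + y j) x = Z x i + Z x j := by
  rw [applyVF_eq_fderiv, ((hasFDerivAt_apply i x).fun_add (hasFDerivAt_apply j x)).fderiv]
  rfl

/-- Coordinates on ℝ⁸: `(u₁,u₂,u₃,u₄,v₁,v₂,v₃,v₄)` indexed by `0,…,7`.  The 13 listed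
infinitesimal generators of the 13-dimensional symmetry subgroup of SL(6) each send
`F₁ = u₂ − v₁` and `F₂ = u₃ + v₄` to ℝ-linear combinations of `F₁, F₂`; in particular
they are tangent to the sixfold `{F₁ = 0, F₂ = 0}` defined by the linear
ultrahyperbolic system. -/
theorem statement19 :
    ∀ Z ∈ ([
      fun _ : Fin 8 → ℝ => (![1, 0, 0, 0, 0, 0, 0, 0] : Fin 8 → ℝ),        -- ∂u₁
      fun _ => ![0, 0, 0, 1, 0, 0, 0, 0],                                   -- ∂u₄
      fun _ => ![0, 0, 0, 0, 0, 1, 0, 0],                                   -- ∂v₂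
      fun _ => ![0, 0, 0, 0, 0, 0, 1, 0],                                   -- ∂v₃
      fun _ => ![0, 1, 0, 0, 1, 0, 0, 0],                                   -- ∂u₂ + ∂v₁
      fun _ => ![0, 0, 1, 0, 0, 0, 0, -1],                                  -- ∂u₃ − ∂v₄
      fun x => ![x 0, x 1, 0, 0, x 4, x 5, 0, 0],
      fun x => ![0, 0, x 2, x 3, 0, 0, x 6, x 7],
      fun x => ![0, 0, -(x 1), x 0, 0, 0, -(x 5), x 4],
      fun x => ![x 3, -(x 2), 0, 0, x 7, -(x 6), 0, 0],
      fun x => ![0, x 0, -(x 3), 0, x 0, x 4 + x 1, -(x 7) + x 2, x 3],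
      fun x => ![x 1 + x 4, x 5, x 6, -(x 2) + x 7, x 5, 0, 0, -(x 6)],
      fun x => ![0, x 1, x 2, 0, x 4, x 5 + x 5, x 6 + x 6, x 7]
      ] : List ((Fin 8 → ℝ) → (Fin 8 → ℝ))),
    ∃ a b c d : ℝ,
      (∀ x : Fin 8 → ℝ,
        applyVF Z (fun y => y 1 - y 4) x = a * (x 1 - x 4) + b * (x 2 + x 7) ∧
        applyVF Z (fun y => y 2 + y 7) x = c * (x 1 - x 4) + d * (x 2 + x 7)) ∧
      (∀ x : Fin 8 → ℝ, x 1 - x 4 = 0 → x 2 + x 7 = 0 →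
        applyVF Z (fun y => y 1 - y 4) x = 0 ∧
        applyVF Z (fun y => y 2 + y 7) x = 0) := by
  intro Z hZ
  suffices ∃ a b c d : ℝ, ∀ x : Fin 8 → ℝ,
      Z x 1 - Z x 4 = a * (x 1 - x 4) + b * (x 2 + x 7) ∧
      Z x 2 + Z x 7 = c * (x 1 - x 4) + d * (x 2 + x 7) by
    obtain ⟨a, b, c, d, hZF⟩ := this
    simp only [applyVF_coord_sub, applyVF_coord_add]
    exact ⟨a, b, c, d, hZF, fun x h₁ h₂ => by simp [hZF x, h₁, h₂]⟩
  simp only [List.mem_cons, List.not_mem_nil, or_false] at hZ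
  rcases hZ with rfl | rfl | rfl | rfl | rfl | rfl | rfl | rfl | rfl | rfl | rfl | rfl | rfl
  exacts [⟨0, 0, 0, 0, by simp⟩, ⟨0, 0, 0, 0, by simp⟩, ⟨0, 0, 0, 0, by simp⟩,
    ⟨0, 0, 0, 0, by simp⟩, ⟨0, 0, 0, 0, by simp⟩, ⟨0, 0, 0, 0, by simp⟩,
    ⟨1, 0, 0, 0, by simp⟩, ⟨0, 0, 0, 1, by simp⟩,
    ⟨0, 0, -1, 0, fun x => ⟨by simp, by simp; ring⟩⟩,
    ⟨0, -1, 0, 0, fun x => ⟨by simp; ring, by simp⟩⟩,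
    ⟨0, 0, 0, 0, by simp⟩, ⟨0, 0, 0, 0, by simp⟩, ⟨1, 0, 0, 1, by simp⟩]
end
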